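/- arXiv:2309.11624 — 2 statements merged into one kernel-verified Lean document; each statement's English description precedes it below -/
import Mathlib

section
/- Let A = kQ/I be a special multiserial and locally monomial algebra and N a weakly connected component of G_{Q,I} with S_N = {s_1 <_s ⋯ <_s s_k}. Then each path m_i (0 ≤ i ≤ k) of Definition of S_N* does not lie in I_N, i.e., m_i ∉ I_N. -/
/-!
Each `ω_a` is a longest unbranched path through `a`. Two unbranched paths through a common arrow
agree around it, since inner vertices have a single in- and out-arrow; so by maximality two `ω`'s
sharing an arrow coincide. Hence `W = ω(N)` has no repeated arrow and `≤_s` compares positions in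
`W` of first arrows.

Each `m_i` is a piece `p` of `W` (of `W W` when the junction `ω_n ω_0` is nonzero) followed by
`s_j` minus its last arrow, or, for `i = k` when `ω_n ω_0 ∈ I_N`, a piece of `W`. If `m_i ∈ I_N`,
some generator `r ∈ R_N` divides it. By minimality of `R_N`, `r` does not lie inside `s_j` minus
its last arrow. A quadratic junction relation `r` would then consist of two consecutive arrows of
`W W`, where junctions are nonzero. A relation `r` of `S_N` would start inside `p`, strictly
between the first arrows of `s_i` and `s_{i+1}` (before that of `s_1`, after that of `s_k`),
against the order of `S_N`.
-/

namespace UMPPaper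

variable {V A : Type}

/-- A (non-trivial) path in the quiver with source/target maps `s`, `t`,
represented as a nonempty list of composable arrows. -/
def IsPath (s t : A → V) (p : List A) : Prop :=
  p ≠ [] ∧ p.Chain' (fun a b => t a = s b)

/-- `Q` is a cyclic quiver: there is a repetition-free path through all arrows
(and all vertices) whose target equals its source. -/
def IsCyclicQuiver (s t : A → V) : Prop :=
  ∃ p : List A, IsPath s t p ∧ p.Nodup ∧ (∀ a : A, a ∈ p) ∧
    (∀ v : V, ∃ a ∈ p, s a = v ∨ t a = v) ∧
    (∃ x ∈ p.getLast?, ∃ y ∈ p.head?, t x = s y)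

/-- `Φ_a`: paths containing the arrow `a` as a subpath, all of whose
intermediate vertices have exactly one incoming and exactly one outgoing arrow. -/
def Phi (s t : A → V) (a : A) : Set (List A) :=
  {p | IsPath s t p ∧ [a] <:+: p ∧
    ∀ x ∈ p.dropLast, (∃! b : A, s b = t x) ∧ (∃! b : A, t b = t x)}

/-- Specification of the assignment `a ↦ ω_a`. -/
def OmegaSpec (s t : A → V) (ω : A → List A) : Prop :=
  (IsCyclicQuiver s t → ∃ p : List A, IsPath s t p ∧ p.Nodup ∧ (∀ a : A, a ∈ p) ∧
      (∃ x ∈ p.getLast?, ∃ y ∈ p.head?, t x = s y) ∧ ∀ a : A, ω a = p) ∧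
  (¬ IsCyclicQuiver s t →
    ∀ a : A, ω a ∈ Phi s t a ∧ ∀ q ∈ Phi s t a, q.length ≤ (ω a).length)

/-- The quiver is connected (as an undirected graph on vertices). -/
def QConnected (s t : A → V) : Prop :=
  ∀ u v : V, Relation.ReflTransGen
    (fun x y => ∃ a : A, (s a = x ∧ t a = y) ∨ (s a = y ∧ t a = x)) u v

/-! ## Bound quiver algebras: the ideal `I` is abstracted by the set `Zi` of paths lying in it. -/

/-- The set of paths lying in a (two-sided) ideal is closed under taking super-paths. -/
def ZeroClosed (Zi : List A → Prop) : Prop :=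
  ∀ p q : List A, Zi p → p <:+: q → Zi q

/-- Path-level content of admissibility: `I ⊆ R², Rᵐ ⊆ I` for some `m ≥ 2`. -/
def Admissible (s t : A → V) (Zi : List A → Prop) : Prop :=
  (∀ p : List A, Zi p → 2 ≤ p.length) ∧
  ∃ m : ℕ, 2 ≤ m ∧ ∀ p : List A, IsPath s t p → m ≤ p.length → Zi p

/-- `t(p) = s(q)` and the junction (last arrow of `p`)·(first arrow of `q`) is not in `I`. -/
def JunctionOK (s t : A → V) (Zi : List A → Prop) (p q : List A) : Prop :=
  ∃ x ∈ p.getLast?, ∃ y ∈ q.head?, t x = s y ∧ ¬ Zi [x, y]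

/-- Directed edge of the ramifications graph, on path-vertices. -/
def REdgeP (s t : A → V) (Zi : List A → Prop) (p q : List A) : Prop :=
  p ≠ q ∧ JunctionOK s t Zi p q

/-- Directed edge `ω_a → ω_b` of the ramifications graph `G_{Q,I}`. -/
def REdge (s t : A → V) (Zi : List A → Prop) (ω : A → List A) (a b : A) : Prop :=
  REdgeP s t Zi (ω a) (ω b)

/-- Undirected adjacency (including equality of vertices) used for weak connectivity. -/
def RAdj (s t : A → V) (Zi : List A → Prop) (ω : A → List A) (a b : A) : Prop :=
  ω a = ω b ∨ REdge s t Zi ω a b ∨ REdge s t Zi ω b a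

/-- `a` and `b` lie in the same weakly connected component of `G_{Q,I}`. -/
def SameComp (s t : A → V) (Zi : List A → Prop) (ω : A → List A) (a b : A) : Prop :=
  Relation.ReflTransGen (RAdj s t Zi ω) a b

/-- `N` (a set of arrows) is (the arrow set `(Q_N)₁` of) a weakly connected
component of the ramifications graph `G_{Q,I}`. -/
def IsComp (s t : A → V) (Zi : List A → Prop) (ω : A → List A) (N : Set A) : Prop :=
  ∃ a : A, N = {b | SameComp s t Zi ω a b}

/-- A path of the subquiver `Q_N`. -/
def PathIn (s t : A → V) (N : Set A) (p : List A) : Prop :=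
  IsPath s t p ∧ ∀ x ∈ p, x ∈ N

/-- `m` is (a representative of) a maximal path of `A_N = kQ_N/I_N`
(for `N = Set.univ` this is a maximal path of `A = kQ/I`). -/
def MaxPathIn (s t : A → V) (Zi : List A → Prop) (N : Set A) (m : List A) : Prop :=
  PathIn s t N m ∧ ¬ Zi m ∧
  (∀ α ∈ N, (∃ x ∈ m.getLast?, t x = s α) → Zi (m ++ [α])) ∧
  (∀ α ∈ N, (∃ x ∈ m.head?, t α = s x) → Zi (α :: m))

/-- `A_N` is a UMP algebra: any two non-disjoint maximal paths coincide. -/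
def UMPin (s t : A → V) (Zi : List A → Prop) (N : Set A) : Prop :=
  ∀ m m' : List A, MaxPathIn s t Zi N m → MaxPathIn s t Zi N m' →
    (∃ a, a ∈ m ∧ a ∈ m') → m = m'

/-- `A = kQ/I` is special multiserial: every arrow has at most one right and at
most one left arrow-extension outside `I`. -/
def SpecialMultiserial (s t : A → V) (Zi : List A → Prop) : Prop :=
  ∀ α β γ : A,
    ((t α = s β ∧ ¬ Zi [α, β]) → (t α = s γ ∧ ¬ Zi [α, γ]) → β = γ) ∧
    ((t β = s α ∧ ¬ Zi [β, α]) → (t γ = s α ∧ ¬ Zi [γ, α]) → β = γ)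

/-- `ws = [ω_0, …, ω_n]` is the enumeration of the vertices of the component `N`
in edge order; `ω(N) = ws.flatten`. -/
def CompEnum (s t : A → V) (Zi : List A → Prop) (ω : A → List A)
    (N : Set A) (ws : List (List A)) : Prop :=
  ws ≠ [] ∧ ws.Nodup ∧ (∀ p, p ∈ ws ↔ ∃ a ∈ N, ω a = p) ∧
  ws.Chain' (fun p q => JunctionOK s t Zi p q) ∧ IsPath s t ws.flatten

/-- `W^{(l)}`, the `l`-fold concatenation of `W`. -/
def cyclePow (W : List A) (l : ℕ) : List A := (List.replicate l W).flatten

/-- `R` is a minimal set of zero relations generating `I_N` (so `A_N` is monomial). -/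
def MinGen (s t : A → V) (Zi : List A → Prop) (N : Set A) (R : Set (List A)) : Prop :=
  (∀ r ∈ R, PathIn s t N r ∧ Zi r) ∧
  (∀ p, PathIn s t N p → (Zi p ↔ ∃ r ∈ R, r <:+: p)) ∧
  (∀ r ∈ R, ∀ r' ∈ R, r <:+: r' → r = r')

/-- `r` is a quadratic junction relation `ω_a^{l_a} ω_b^0` with `a, b ∈ (Q_N)₁`. -/
def IsJuncRel (ω : A → List A) (N : Set A) (r : List A) : Prop :=
  ∃ a ∈ N, ∃ b ∈ N, ∃ x ∈ (ω a).getLast?, ∃ y ∈ (ω b).head?, r = [x, y]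

/-- `S_N = R_N \ Ω_N`. -/
def SRel (ω : A → List A) (N : Set A) (R : Set (List A)) : Set (List A) :=
  {r ∈ R | ¬ IsJuncRel ω N r}

/-- The order `≤_f` on arrows given by position along `W = ω(N)`. -/
def leF (W : List A) (α β : A) : Prop :=
  ∃ u u' : List A, W = u ++ α :: u' ∧ β ∈ α :: u'

/-- The order `≤_s` on relations: comparison of first arrows. -/
def leS (W : List A) (u v : List A) : Prop :=
  ∃ x ∈ u.head?, ∃ y ∈ v.head?, leF W x y

/-- `ss = [s_1, …, s_k]` enumerates `S` in strictly increasing `≤_s` order. -/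
def SEnum (W : List A) (S : Set (List A)) (ss : List (List A)) : Prop :=
  ss.Nodup ∧ (∀ r, r ∈ ss ↔ r ∈ S) ∧ ss.Chain' (fun u v => leS W u v ∧ u ≠ v)

/-- `m` is one of the paths `m_i`, `0 ≤ i ≤ k`, of the definition of `S_N^*`.
Note that `ω_n^{l_n} ω_0^0 ∈ I_N` is expressed by `¬ JunctionOK s t Zi W W`. -/
def IsMi (s t : A → V) (Zi : List A → Prop) (W : List A)
    (ss : List (List A)) (m : List A) : Prop :=
  -- case `0 < i < k`
  (∃ p ∈ ss.zip ss.tail, ∃ u v v' : List A, ∃ x ∈ p.1.head?, ∃ y ∈ p.2.head?,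
      W = u ++ [x] ++ v ++ [y] ++ v' ∧ m = v ++ p.2.dropLast) ∨
  -- case `i = 0`, `ω_n^{l_n} ω_0^0 ∈ I_N`
  (¬ JunctionOK s t Zi W W ∧
    ∃ s1 ∈ ss.head?, ∃ u z : List A, W = u ++ s1 ++ z ∧ m = u ++ s1.dropLast) ∨
  -- case `i = k`, `ω_n^{l_n} ω_0^0 ∈ I_N`
  (¬ JunctionOK s t Zi W W ∧
    ∃ sk ∈ ss.getLast?, ∃ v z : List A, W = z ++ sk ++ v ∧ m = sk.tail ++ v) ∨
  -- case `i ∈ {0, k}`, `ω_n^{l_n} ω_0^0 ∉ I_N`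
  (JunctionOK s t Zi W W ∧
    ∃ s1 ∈ ss.head?, ∃ sk ∈ ss.getLast?, ∃ u v z z' : List A,
      ∃ x ∈ s1.head?, ∃ y ∈ sk.head?,
      W = u ++ [x] ++ z ∧ W = z' ++ [y] ++ v ∧ m = v ++ u ++ s1.dropLast)

/-- `r` is an `ω`-relation: a zero relation of length greater than two which is the
unique element of `I` dividing it. -/
def IsOmegaRel (s t : A → V) (Zi : List A → Prop) (r : List A) : Prop :=
  IsPath s t r ∧ Zi r ∧ 3 ≤ r.length ∧ ∀ r' : List A, Zi r' → r' <:+: r → r' = r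


end UMPPaper

namespace List

variable {α : Type*}

theorem pair_infix_append {a b : α} {l₁ l₂ : List α} (h : [a, b] <:+: l₁ ++ l₂) :
    [a, b] <:+: l₁ ∨ [a, b] <:+: l₂ ∨ (a ∈ l₁.getLast? ∧ b ∈ l₂.head?) := by
  rcases infix_append_iff_ne_nil.1 h with h | h | ⟨k₁, k₂, hk₁, hk₂, hk, hsuf, hpre⟩
  · exact .inl h
  · exact .inr (.inl h)
  · obtain ⟨rfl, rfl⟩ : k₁ = [a] ∧ k₂ = [b] := by
      match k₁, k₂, hk₁, hk₂ with
      | [_], _ :: _, _, _ => simp_all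
      | _ :: _ :: _, _ :: _, _, _ => simp at hk
    exact .inr (.inr ⟨singleton_suffix_iff_getLast?_eq_some.1 hsuf,
      singleton_prefix_iff_head?_eq_some.1 hpre⟩)

theorem pair_infix_append_cons {a b c : α} {l₁ l₂ : List α} (h : [a, b] <:+: l₁ ++ c :: l₂) :
    [a, b] <:+: l₁ ++ [c] ∨ [a, b] <:+: c :: l₂ := by
  rcases pair_infix_append h with h | h | ⟨ha, hb⟩
  · exact .inl (h.trans (infix_append_left))
  · exact .inr h
  · obtain ⟨k, rfl⟩ := getLast?_eq_some_iff.1 ha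
    obtain rfl : b = c := (by simpa using hb : c = b).symm
    exact .inl ⟨k, [], by simp⟩

theorem IsInfix.head_mem_or_infix_of_append {l l₁ l₂ : List α} (h : l <:+: l₁ ++ l₂)
    (hl : l ≠ []) : (∃ a ∈ l.head?, a ∈ l₁) ∨ l <:+: l₂ := by
  rcases infix_append_iff_ne_nil.1 h with h | h | ⟨k₁, k₂, hk₁, -, rfl, hsuf, -⟩
  · exact .inl ⟨l.head hl, head?_eq_some_head hl, h.subset (head_mem hl)⟩
  · exact .inr h
  · exact .inl ⟨k₁.head hk₁, by simp [head?_append, head?_eq_some_head hk₁],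
      hsuf.subset (head_mem hk₁)⟩

theorem Pairwise.rel_head_of_mem {R : α → α → Prop} (hR : ∀ x, R x x) {l : List α} {a x : α}
    (hl : l.Pairwise R) (ha : l.head? = some a) (hx : x ∈ l) : R a x := by
  obtain ⟨l, rfl⟩ := head?_eq_some_iff.1 ha
  rcases mem_cons.1 hx with rfl | hx
  exacts [hR x, rel_of_pairwise_cons hl hx]

theorem Pairwise.rel_getLast_of_mem {R : α → α → Prop} (hR : ∀ x, R x x) {l : List α}
    {b x : α} (hl : l.Pairwise R) (hb : l.getLast? = some b) (hx : x ∈ l) : R x b := by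
  obtain ⟨l, rfl⟩ := getLast?_eq_some_iff.1 hb
  rcases mem_append.1 hx with hx | hx
  · exact (pairwise_append.1 hl).2.2 x hx b (mem_singleton_self b)
  · obtain rfl := mem_singleton.1 hx
    exact hR x

theorem exists_eq_append_cons_cons_of_mem_zip_tail {l : List α} {a b : α}
    (h : (a, b) ∈ l.zip l.tail) : ∃ l₁ l₂, l = l₁ ++ a :: b :: l₂ := by
  induction l with
  | nil => simp at h
  | cons c l ih =>
    cases l with
    | nil => simp at h
    | cons d l =>
      rcases mem_cons.1 h with h | h
      · obtain ⟨rfl, rfl⟩ := Prod.mk.inj h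
        exact ⟨[], l, rfl⟩
      · obtain ⟨l₁, l₂, hl⟩ := ih h
        exact ⟨c :: l₁, l₂, by rw [hl]; rfl⟩

theorem Pairwise.rel_or_rel_of_mem_zip_tail {R : α → α → Prop} (hR : ∀ x, R x x)
    {l : List α} {a b x : α} (hl : l.Pairwise R) (hab : (a, b) ∈ l.zip l.tail) (hx : x ∈ l) :
    R x a ∨ R b x := by
  obtain ⟨l₁, l₂, rfl⟩ := exists_eq_append_cons_cons_of_mem_zip_tail hab
  obtain ⟨-, hab₂, hl₁⟩ := pairwise_append.1 hl
  rcases mem_append.1 hx with hx | hx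
  · exact .inl (hl₁ x hx a mem_cons_self)
  · rcases mem_cons.1 hx with rfl | hx
    · exact .inl (hR x)
    · rcases mem_cons.1 hx with rfl | hx
      · exact .inr (hR x)
      · exact .inr (rel_of_pairwise_cons (pairwise_cons.1 hab₂).2 hx)

theorem IsChain.exists_rel_of_mem_tail {R : α → α → Prop} {x : α} :
    ∀ {l : List α}, l.IsChain R → x ∈ l.tail → ∃ w ∈ l.dropLast, R w x
  | [], _, hx => by simp at hx
  | [_], _, hx => by simp at hx
  | a :: b :: l, h, hx => by
    rcases mem_cons.1 hx with rfl | hx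
    · exact ⟨a, by simp, (isChain_cons_cons.1 h).1⟩
    · obtain ⟨w, hw, hwx⟩ := (isChain_cons_cons.1 h).2.exists_rel_of_mem_tail hx
      exact ⟨w, by rw [dropLast_cons_cons]; exact mem_cons_of_mem a hw, hwx⟩

theorem IsChain.prefix_or_prefix {R : α → α → Prop} :
    ∀ {b : α} {l₁ l₂ : List α}, (b :: l₁).IsChain R → (b :: l₂).IsChain R →
      (∀ x ∈ (b :: l₁).dropLast, ∀ y z, R x y → R x z → y = z) → l₁ <+: l₂ ∨ l₂ <+: l₁
  | _, [], _, _, _, _ => .inl (nil_prefix)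
  | _, _ :: _, [], _, _, _ => .inr (nil_prefix)
  | b, c :: l₁, c' :: l₂, h₁, h₂, huniq => by
    obtain rfl : c = c' :=
      huniq b (by simp) c c' (isChain_cons_cons.1 h₁).1 (isChain_cons_cons.1 h₂).1
    have huniq' : ∀ x ∈ (c :: l₁).dropLast, ∀ y z, R x y → R x z → y = z :=
      fun x hx => huniq x (by rw [dropLast_cons_cons]; exact mem_cons_of_mem b hx)
    rcases (isChain_cons_cons.1 h₁).2.prefix_or_prefix (isChain_cons_cons.1 h₂).2 huniq' with h | h
    · exact .inl (cons_prefix_cons.2 ⟨rfl, h⟩)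
    · exact .inr (cons_prefix_cons.2 ⟨rfl, h⟩)

section idxOf

variable [DecidableEq α] {l l₁ l₂ : List α} {a b : α}

theorem Nodup.idxOf_eq_length (hl : l.Nodup) (h : l = l₁ ++ a :: l₂) : l.idxOf a = l₁.length := by
  subst h
  have ha : a ∉ l₁ := fun ha => (nodup_append.1 hl).2.2 a ha a mem_cons_self rfl
  simp [idxOf_append_of_notMem ha]

theorem Nodup.notMem_left_of_idxOf_le (hl : l.Nodup) (h : l = l₁ ++ a :: l₂)
    (hab : l.idxOf a ≤ l.idxOf b) : b ∉ l₁ := fun hb => by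
  have := ((h ▸ prefix_append l₁ (a :: l₂)).mem_iff_idxOf_lt_length b).1 hb
  have := hl.idxOf_eq_length h
  omega

theorem Nodup.notMem_right_of_idxOf_le (hl : l.Nodup) (h : l = l₁ ++ a :: l₂)
    (hba : l.idxOf b ≤ l.idxOf a) : b ∉ l₂ := fun hb => by
  rw [hl.idxOf_eq_length h] at hba
  subst h
  have hnd := nodup_append.1 hl
  have hb₁ : b ∉ l₁ := fun hb₁ => hnd.2.2 b hb₁ b (mem_cons_of_mem a hb) rfl
  have hab : a ≠ b := fun e => (nodup_cons.1 hnd.2.1).1 (e ▸ hb)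
  rw [idxOf_append_of_notMem hb₁, idxOf_cons_ne _ hab] at hba
  omega

end idxOf

theorem Nodup.head?_eq_of_pair_infix {l l₁ l₂ : List α} {a b : α} (hl : l.Nodup)
    (h : l = l₁ ++ a :: l₂) (hab : [a, b] <:+: l) : l₂.head? = some b := by
  classical
  obtain ⟨k₁, k₂, hk⟩ := hab
  have hk' : l = k₁ ++ a :: (b :: k₂) := by simp [← hk]
  have := (hl.idxOf_eq_length h).symm.trans (hl.idxOf_eq_length hk')
  obtain ⟨-, h'⟩ := append_inj (h.symm.trans hk') this
  simp [(cons_inj_right a).1 h']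

end List

namespace UMPPaper

variable {V A : Type}

section Paths

variable {s t : A → V} {N : Set A}

theorem PathIn.infix {p q : List A} (hp : PathIn s t N p) (hq : q <:+: p) (hne : q ≠ []) :
    PathIn s t N q :=
  ⟨⟨hne, List.IsChain.infix hp.1.2 hq⟩, fun x hx => hp.2 x (hq.subset hx)⟩

theorem PathIn.append {p q : List A} (hp : PathIn s t N p) (hq : PathIn s t N q)
    (hpq : ∀ x ∈ p.getLast?, ∀ y ∈ q.head?, t x = s y) : PathIn s t N (p ++ q) :=
  ⟨⟨by simp [hp.1.1], List.isChain_append.2 ⟨hp.1.2, hq.1.2, hpq⟩⟩,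
    fun x hx => (List.mem_append.1 hx).elim (hp.2 x) (hq.2 x)⟩

theorem PathIn.append_cons {p l : List A} {y : A} (hp : PathIn s t N (p ++ [y]))
    (hl : PathIn s t N (y :: l)) : PathIn s t N (p ++ y :: l) :=
  ⟨⟨by simp, List.isChain_split.2 ⟨hp.1.2, hl.1.2⟩⟩,
    fun x hx => (List.mem_append.1 hx).elim (fun hx => hp.2 x (List.mem_append_left _ hx)) (hl.2 x)⟩

end Paths

section Unbranched

variable {s t : A → V}

def IsUnbranchedPath (s t : A → V) (p : List A) : Prop :=
  IsPath s t p ∧ ∀ x ∈ p.dropLast, (∃! b : A, s b = t x) ∧ (∃! b : A, t b = t x)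

theorem mem_Phi_iff {a : A} {p : List A} : p ∈ Phi s t a ↔ IsUnbranchedPath s t p ∧ a ∈ p := by
  simp only [Phi, IsUnbranchedPath, Set.mem_ofPred_eq, List.singleton_infix_iff]
  tauto

theorem IsUnbranchedPath.splice {p₁ p₂ q₁ q₂ : List A} {b : A}
    (hp : IsUnbranchedPath s t (p₁ ++ b :: p₂)) (hq : IsUnbranchedPath s t (q₁ ++ b :: q₂)) :
    IsUnbranchedPath s t (p₁ ++ b :: q₂) := by
  refine ⟨⟨by simp, List.isChain_split.2
    ⟨(List.isChain_split.1 hp.1.2).1, (List.isChain_split.1 hq.1.2).2⟩⟩, fun x hx => ?_⟩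
  have hdrop (l₁ l₂ : List A) : (l₁ ++ b :: l₂).dropLast = l₁ ++ (b :: l₂).dropLast :=
    List.dropLast_append_of_ne_nil (List.cons_ne_nil _ _)
  rw [hdrop] at hx
  rcases List.mem_append.1 hx with hx | hx
  · exact hp.2 x (hdrop _ _ ▸ List.mem_append_left _ hx)
  · exact hq.2 x (hdrop _ _ ▸ List.mem_append_right _ hx)

theorem IsUnbranchedPath.reverse {p : List A} (hp : IsUnbranchedPath s t p) :
    IsUnbranchedPath t s p.reverse := by
  refine ⟨⟨by simpa using hp.1.1,
    List.isChain_reverse.2 (List.IsChain.imp (fun _ _ h => h.symm) hp.1.2)⟩, fun x hx => ?_⟩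
  rw [List.dropLast_reverse, List.mem_reverse] at hx
  obtain ⟨w, hw, hwx⟩ := List.IsChain.exists_rel_of_mem_tail hp.1.2 hx
  rw [← hwx]
  exact (hp.2 w hw).symm

theorem IsUnbranchedPath.prefix_or_prefix {p₁ p₂ q₁ q₂ : List A} {b : A}
    (hp : IsUnbranchedPath s t (p₁ ++ b :: p₂)) (hq : IsUnbranchedPath s t (q₁ ++ b :: q₂)) :
    p₂ <+: q₂ ∨ q₂ <+: p₂ := by
  refine List.IsChain.prefix_or_prefix (List.isChain_split.1 hp.1.2).2
    (List.isChain_split.1 hq.1.2).2 fun x hx y z hy hz => ?_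
  have hx' : x ∈ (p₁ ++ b :: p₂).dropLast := by
    rw [List.dropLast_append_of_ne_nil (List.cons_ne_nil _ _)]
    exact List.mem_append_right _ hx
  exact (hp.2 x hx').1.unique hy.symm hz.symm

theorem IsUnbranchedPath.suffix_or_suffix {p₁ p₂ q₁ q₂ : List A} {b : A}
    (hp : IsUnbranchedPath s t (p₁ ++ b :: p₂)) (hq : IsUnbranchedPath s t (q₁ ++ b :: q₂)) :
    p₁ <:+ q₁ ∨ q₁ <:+ p₁ := by
  have hp' := hp.reverse
  have hq' := hq.reverse
  simp only [List.reverse_append, List.reverse_cons, List.append_assoc, List.singleton_append]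
    at hp' hq'
  simpa only [List.reverse_prefix] using hp'.prefix_or_prefix hq'

end Unbranched

section Omega

variable {s t : A → V} {ω : A → List A}

theorem OmegaSpec.infix_omega (hω : OmegaSpec s t ω) (hnc : ¬ IsCyclicQuiver s t) {x : A}
    {p : List A} (hp : p ∈ Phi s t x) : p <:+: ω x := by
  have hmax := (hω.2 hnc x).2
  obtain ⟨hωu, hxω⟩ := mem_Phi_iff.1 (hω.2 hnc x).1
  obtain ⟨hpu, hxp⟩ := mem_Phi_iff.1 hp
  obtain ⟨p₁, p₂, rfl⟩ := List.append_of_mem hxp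
  obtain ⟨q₁, q₂, hq⟩ := List.append_of_mem hxω
  rw [hq] at hωu hmax ⊢
  have h₁ := hmax _ (mem_Phi_iff.2 ⟨hpu.splice hωu, by simp⟩)
  have h₂ := hmax _ (mem_Phi_iff.2 ⟨hωu.splice hpu, by simp⟩)
  simp only [List.length_append, List.length_cons] at h₁ h₂
  have hsuf : p₁ <:+ q₁ := (hpu.suffix_or_suffix hωu).elim id fun h =>
    (h.eq_of_length_le (by omega)) ▸ List.suffix_refl q₁
  have hpre : p₂ <+: q₂ := (hpu.prefix_or_prefix hωu).elim id fun h =>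
    (h.eq_of_length_le (by omega)) ▸ List.prefix_refl q₂
  obtain ⟨r₁, rfl⟩ := hsuf
  obtain ⟨r₂, rfl⟩ := hpre
  exact ⟨r₁, r₂, by simp⟩

theorem OmegaSpec.mem_omega (hω : OmegaSpec s t ω) (a : A) : a ∈ ω a := by
  by_cases hc : IsCyclicQuiver s t
  · obtain ⟨p, -, -, hall, -, heq⟩ := hω.1 hc
    exact heq a ▸ hall a
  · exact (mem_Phi_iff.1 (hω.2 hc a).1).2

theorem OmegaSpec.omega_ne_nil (hω : OmegaSpec s t ω) (a : A) : ω a ≠ [] :=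
  List.ne_nil_of_mem (hω.mem_omega a)

theorem OmegaSpec.omega_eq_of_mem (hω : OmegaSpec s t ω) {a x : A} (hx : x ∈ ω a) :
    ω x = ω a := by
  by_cases hc : IsCyclicQuiver s t
  · obtain ⟨p, -, -, -, -, heq⟩ := hω.1 hc
    rw [heq a, heq x]
  · have hax : ω a <:+: ω x :=
      hω.infix_omega hc (mem_Phi_iff.2 ⟨(mem_Phi_iff.1 (hω.2 hc a).1).1, hx⟩)
    have hxa : ω x <:+: ω a := hω.infix_omega hc
      (mem_Phi_iff.2 ⟨(mem_Phi_iff.1 (hω.2 hc x).1).1, hax.subset (hω.mem_omega a)⟩)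
    exact hxa.eq_of_length (le_antisymm hxa.length_le hax.length_le)

/-- A repeated arrow would let us run through the cycle between its occurrences once more. -/
theorem OmegaSpec.nodup_omega (hω : OmegaSpec s t ω) (a : A) : (ω a).Nodup := by
  by_cases hc : IsCyclicQuiver s t
  · obtain ⟨p, -, hnd, -, -, heq⟩ := hω.1 hc
    exact heq a ▸ hnd
  · rw [List.nodup_iff_sublist]
    intro x hxx
    obtain ⟨r₁, r₂, hr, hx₁, hx₂⟩ := List.cons_sublist_iff.1 hxx
    obtain ⟨α, β, rfl⟩ := List.append_of_mem hx₁
    obtain ⟨γ, δ, rfl⟩ := List.append_of_mem (List.singleton_sublist.1 hx₂)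
    have hu := (mem_Phi_iff.1 (hω.2 hc a).1).1
    have e₁ : ω a = (α ++ x :: (β ++ γ)) ++ x :: δ := by simp [hr]
    have e₂ : ω a = α ++ x :: (β ++ γ ++ x :: δ) := by simp [hr]
    have hlong := (e₁ ▸ hu).splice (e₂ ▸ hu)
    have ha : a ∈ (α ++ x :: (β ++ γ)) ++ x :: (β ++ γ ++ x :: δ) := by
      have := hω.mem_omega a
      rw [hr] at this
      simp only [List.mem_append, List.mem_cons] at this ⊢
      tauto
    have := (hω.2 hc a).2 _ (mem_Phi_iff.2 ⟨hlong, ha⟩)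
    simp [hr] at this
    omega

end Omega

section Component

variable {s t : A → V} {Zi : List A → Prop} {ω : A → List A} {N : Set A}

theorem JunctionOK.target_eq_source {p q : List A} (h : JunctionOK s t Zi p q) :
    ∀ x ∈ p.getLast?, ∀ y ∈ q.head?, t x = s y := by
  obtain ⟨x', hx', y', hy', hxy, -⟩ := h
  intro x hx y hy
  rwa [Option.mem_unique hx hx', Option.mem_unique hy hy']

variable {ws : List (List A)}

theorem CompEnum.nodup_flatten (hω : OmegaSpec s t ω) (hws : CompEnum s t Zi ω N ws) :
    ws.flatten.Nodup := by
  refine List.nodup_flatten.2 ⟨fun l hl => ?_, hws.2.1.imp_of_mem fun hp hq hne => ?_⟩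
  · obtain ⟨a, -, rfl⟩ := (hws.2.2.1 l).1 hl
    exact hω.nodup_omega a
  · obtain ⟨a, -, rfl⟩ := (hws.2.2.1 _).1 hp
    obtain ⟨b, -, rfl⟩ := (hws.2.2.1 _).1 hq
    exact fun x hxa hxb => hne ((hω.omega_eq_of_mem hxa).symm.trans (hω.omega_eq_of_mem hxb))

theorem CompEnum.pathIn_flatten (hω : OmegaSpec s t ω) (hN : IsComp s t Zi ω N)
    (hws : CompEnum s t Zi ω N ws) : PathIn s t N ws.flatten := by
  refine ⟨hws.2.2.2.2, fun x hx => ?_⟩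
  obtain ⟨l, hl, hxl⟩ := List.mem_flatten.1 hx
  obtain ⟨a, haN, rfl⟩ := (hws.2.2.1 l).1 hl
  obtain ⟨a₀, rfl⟩ := hN
  exact Relation.ReflTransGen.tail haN (Or.inl (hω.omega_eq_of_mem hxl).symm)

/-- In `ω(N)` the last arrow of a block `ω_a` is followed by the first arrow of the next block,
and the enumeration makes that junction nonzero. -/
theorem CompEnum.not_infix_flatten (hω : OmegaSpec s t ω) (hws : CompEnum s t Zi ω N ws)
    {r : List A} (hr : IsJuncRel ω N r) (hZr : Zi r) : ¬ r <:+: ws.flatten := by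
  obtain ⟨a, haN, -, -, c, hc, z, -, rfl⟩ := hr
  intro hcz
  obtain ⟨w₁, w₂, hws_eq⟩ := List.append_of_mem ((hws.2.2.1 (ω a)).2 ⟨a, haN, rfl⟩)
  obtain ⟨i, hi⟩ := List.getLast?_eq_some_iff.1 hc
  have hz : w₂.flatten.head? = some z :=
    (hws.nodup_flatten hω).head?_eq_of_pair_infix (l₁ := w₁.flatten ++ i)
      (by simp [hws_eq, hi]) hcz
  obtain ⟨q, w₂, rfl⟩ : ∃ q w, w₂ = q :: w := List.exists_cons_of_ne_nil (by rintro rfl; simp at hz)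
  have hq : q ≠ [] := by
    obtain ⟨b, -, rfl⟩ := (hws.2.2.1 q).1 (by simp [hws_eq])
    exact hω.omega_ne_nil b
  rw [List.flatten_cons, List.head?_append_of_ne_nil _ hq] at hz
  obtain ⟨c', hc', z', hz', -, hnZ⟩ : JunctionOK s t Zi (ω a) q :=
    List.isChain_pair.1 (List.IsChain.infix hws.2.2.2.1 ⟨w₁, w₂, by simp [hws_eq]⟩)
  rw [Option.mem_unique hc' hc, Option.mem_unique hz' hz] at hnZ
  exact hnZ hZr

/-- `≤_s` through positions in `W`; quantifying over the first arrows makes it reflexive. -/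
def HeadIdxLE [DecidableEq A] (W r r' : List A) : Prop :=
  ∀ x ∈ r.head?, ∀ y ∈ r'.head?, W.idxOf x ≤ W.idxOf y

theorem headIdxLE_refl [DecidableEq A] (W r : List A) : HeadIdxLE W r r := fun x hx y hy => by
  rw [Option.mem_unique hx hy]

theorem idxOf_le_of_leF [DecidableEq A] {W : List A} (hW : W.Nodup) {α β : A}
    (h : leF W α β) : W.idxOf α ≤ W.idxOf β := by
  obtain ⟨u, u', hWu, hβ⟩ := h
  have hβu : β ∉ u := fun hu => (List.nodup_append.1 (hWu ▸ hW)).2.2 β hu β hβ rfl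
  rw [hW.idxOf_eq_length hWu]
  exact not_lt.1 fun hlt => hβu (((hWu ▸ List.prefix_append u _).mem_iff_idxOf_lt_length β).2 hlt)

theorem SEnum.pairwise_headIdxLE [DecidableEq A] {W : List A} {S : Set (List A)}
    {ss : List (List A)} (hW : W.Nodup) (hss : SEnum W S ss) : ss.Pairwise (HeadIdxLE W) := by
  let E : List A → List A → Prop := fun r r' =>
    ∃ x ∈ r.head?, ∃ y ∈ r'.head?, W.idxOf x ≤ W.idxOf y
  have : Trans E E E := ⟨fun ⟨x, hx, y, hy, hxy⟩ ⟨y', hy', z, hz, hyz⟩ =>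
    ⟨x, hx, z, hz, hxy.trans (Option.mem_unique hy hy' ▸ hyz)⟩⟩
  have hE : ss.IsChain E := List.IsChain.imp
    (fun _ _ ⟨⟨x, hx, y, hy, hxy⟩, _⟩ => ⟨x, hx, y, hy, idxOf_le_of_leF hW hxy⟩) hss.2.2
  refine hE.pairwise.imp fun ⟨x, hx, y, hy, hxy⟩ x' hx' y' hy' => ?_
  rwa [Option.mem_unique hx' hx, Option.mem_unique hy' hy]

end Component

section Core

variable {s t : A → V} {Zi : List A → Prop} {ω : A → List A} {N : Set A} {R : Set (List A)}

theorem MinGen.not_infix_dropLast (hR : MinGen s t Zi N R) {r rel : List A} (hr : r ∈ R)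
    (hrel : rel ∈ R) : ¬ r <:+: rel.dropLast := fun h => by
  obtain rfl := hR.2.2 r hr rel hrel (h.trans (List.dropLast_prefix rel).isInfix)
  have := h.length_le
  have := List.length_pos_of_ne_nil (hR.1 r hr).1.1.1
  simp only [List.length_dropLast] at *
  omega

theorem MinGen.not_Zi_of_forall_not_infix (hR : MinGen s t Zi N R) {m : List A}
    (hm : PathIn s t N m) (h : ∀ r ∈ R, ¬ r <:+: m) : ¬ Zi m := fun hZ =>
  let ⟨r, hr, hrm⟩ := (hR.2.1 m hm).1 hZ
  h r hr hrm

theorem MinGen.not_infix_append_of_isJuncRel (hR : MinGen s t Zi N R) {P Q : List A}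
    (hP : ∀ r ∈ R, IsJuncRel ω N r → ¬ r <:+: P) (hQ : ∀ r ∈ R, IsJuncRel ω N r → ¬ r <:+: Q)
    (hPQ : JunctionOK s t Zi P Q) : ∀ r ∈ R, IsJuncRel ω N r → ¬ r <:+: P ++ Q := by
  intro r hr hJ hrPQ
  obtain ⟨-, -, -, -, c, -, z, -, rfl⟩ := id hJ
  obtain ⟨c', hc', z', hz', -, hnZ⟩ := hPQ
  rcases List.pair_infix_append hrPQ with h | h | ⟨hc, hz⟩
  · exact hP _ hr hJ h
  · exact hQ _ hr hJ h
  · rw [Option.mem_unique hc' hc, Option.mem_unique hz' hz] at hnZ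
    exact hnZ (hR.1 _ hr).2

theorem MinGen.not_Zi_append_dropLast (hR : MinGen s t Zi N R)
    (hlen : ∀ p, Zi p → 2 ≤ p.length) {P p rel : List A} {y : A} (hP : PathIn s t N P)
    (hPJ : ∀ r ∈ R, IsJuncRel ω N r → ¬ r <:+: P) (hrel : rel ∈ R) (hy : y ∈ rel.head?)
    (hpy : p ++ [y] <:+: P) (hhead : ∀ r ∈ SRel ω N R, ∀ h ∈ r.head?, h ∉ p) :
    ¬ Zi (p ++ rel.dropLast) := by
  obtain ⟨l, rfl⟩ := List.head?_eq_some_iff.1 hy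
  have hl : l ≠ [] := by
    rintro rfl
    simpa using hlen _ (hR.1 _ hrel).2
  have hdrop := List.dropLast_cons_of_ne_nil (x := y) hl
  have hyl : PathIn s t N (y :: l.dropLast) :=
    (hR.1 _ hrel).1.infix (hdrop ▸ (List.dropLast_prefix _).isInfix) (List.cons_ne_nil _ _)
  rw [hdrop]
  refine hR.not_Zi_of_forall_not_infix ((hP.infix hpy (by simp)).append_cons hyl)
    fun r hr hrm => ?_
  by_cases hJ : IsJuncRel ω N r
  · obtain ⟨-, -, -, -, c, -, z, -, rfl⟩ := id hJ
    rcases List.pair_infix_append_cons hrm with h | h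
    · exact hPJ _ hr hJ (h.trans hpy)
    · exact hR.not_infix_dropLast hr hrel (hdrop ▸ h)
  · rcases hrm.head_mem_or_infix_of_append (hR.1 r hr).1.1.1 with ⟨h, hh, hp⟩ | h
    · exact hhead r ⟨hr, hJ⟩ h hh hp
    · exact hR.not_infix_dropLast hr hrel (hdrop ▸ h)

theorem MinGen.not_Zi_of_infix (hR : MinGen s t Zi N R) {P m : List A} (hP : PathIn s t N P)
    (hPJ : ∀ r ∈ R, IsJuncRel ω N r → ¬ r <:+: P) (hm : m <:+: P) (hne : m ≠ [])
    (hhead : ∀ r ∈ SRel ω N R, ∀ h ∈ r.head?, h ∉ m) : ¬ Zi m := by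
  refine hR.not_Zi_of_forall_not_infix (hP.infix hm hne) fun r hr hrm => ?_
  by_cases hJ : IsJuncRel ω N r
  · exact hPJ r hr hJ (hrm.trans hm)
  · have hr₀ : r ≠ [] := (hR.1 r hr).1.1.1
    exact hhead r ⟨hr, hJ⟩ _ (List.head?_eq_some_head hr₀) (hrm.subset (List.head_mem hr₀))

end Core

section Cases

variable [DecidableEq A]

structure MiSetting (s t : A → V) (Zi : List A → Prop) (ω : A → List A) (N : Set A)
    (R : Set (List A)) (W : List A) (ss : List (List A)) : Prop where
  minGen : MinGen s t Zi N R
  two_le_length : ∀ p, Zi p → 2 ≤ p.length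
  pathIn : PathIn s t N W
  nodup : W.Nodup
  not_infix_of_isJuncRel : ∀ r ∈ R, IsJuncRel ω N r → ¬ r <:+: W
  mem_of_mem_SRel : ∀ r ∈ SRel ω N R, r ∈ ss
  mem_R_of_mem : ∀ r ∈ ss, r ∈ R
  pairwise : ss.Pairwise (HeadIdxLE W)

variable {s t : A → V} {Zi : List A → Prop} {ω : A → List A} {N : Set A} {R : Set (List A)}
  {W : List A} {ss : List (List A)}

namespace MiSetting

theorem not_Zi_consecutive (H : MiSetting s t Zi ω N R W ss) {si sj : List A}
    (hzip : (si, sj) ∈ ss.zip ss.tail) {u v v' : List A} {x y : A} (hx : x ∈ si.head?)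
    (hy : y ∈ sj.head?) (hW : W = u ++ [x] ++ v ++ [y] ++ v') : ¬ Zi (v ++ sj.dropLast) := by
  refine H.minGen.not_Zi_append_dropLast H.two_le_length H.pathIn H.not_infix_of_isJuncRel
    (H.mem_R_of_mem sj (List.mem_of_mem_tail (List.of_mem_zip hzip).2)) hy
    ⟨u ++ [x], v', by simp [hW]⟩ fun r hr h hh hv => ?_
  rcases H.pairwise.rel_or_rel_of_mem_zip_tail (headIdxLE_refl W) hzip
    (H.mem_of_mem_SRel r hr) with hle | hle
  · exact H.nodup.notMem_right_of_idxOf_le (l₁ := u) (l₂ := v ++ y :: v') (by simp [hW])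
      (hle h hh x hx) (List.mem_append_left _ hv)
  · exact H.nodup.notMem_left_of_idxOf_le (l₁ := u ++ x :: v) (l₂ := v') (by simp [hW])
      (hle y hy h hh) (by simp [hv])

theorem not_Zi_first (H : MiSetting s t Zi ω N R W ss) {s₁ u z : List A} (hs₁ : s₁ ∈ ss.head?)
    (hW : W = u ++ s₁ ++ z) : ¬ Zi (u ++ s₁.dropLast) := by
  have hs₁R := H.mem_R_of_mem s₁ (List.mem_of_mem_head? hs₁)
  obtain ⟨x, l, rfl⟩ := List.exists_cons_of_ne_nil (H.minGen.1 _ hs₁R).1.1.1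
  refine H.minGen.not_Zi_append_dropLast H.two_le_length H.pathIn H.not_infix_of_isJuncRel
    hs₁R rfl ⟨[], l ++ z, by simp [hW]⟩ fun r hr h hh => ?_
  exact H.nodup.notMem_left_of_idxOf_le (l₂ := l ++ z) (by simp [hW])
    (H.pairwise.rel_head_of_mem (headIdxLE_refl W) hs₁ (H.mem_of_mem_SRel r hr) x rfl h hh)

theorem not_Zi_last (H : MiSetting s t Zi ω N R W ss) {sₖ v z : List A}
    (hsₖ : sₖ ∈ ss.getLast?) (hW : W = z ++ sₖ ++ v) : ¬ Zi (sₖ.tail ++ v) := by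
  have hsₖR := H.mem_R_of_mem sₖ (List.mem_of_mem_getLast? hsₖ)
  obtain ⟨y, l, rfl⟩ := List.exists_cons_of_ne_nil (H.minGen.1 _ hsₖR).1.1.1
  have hl : l ≠ [] := by
    rintro rfl
    simpa using H.two_le_length _ (H.minGen.1 _ hsₖR).2
  refine H.minGen.not_Zi_of_infix H.pathIn H.not_infix_of_isJuncRel ⟨z ++ [y], [], by simp [hW]⟩
    (by simp [hl]) fun r hr h hh => ?_
  exact H.nodup.notMem_right_of_idxOf_le (l₁ := z) (by simp [hW])
    (H.pairwise.rel_getLast_of_mem (headIdxLE_refl W) hsₖ (H.mem_of_mem_SRel r hr) h hh y rfl)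

theorem not_Zi_first_last (H : MiSetting s t Zi ω N R W ss) (hJ : JunctionOK s t Zi W W)
    {s₁ sₖ u v z z' : List A} {x y : A} (hs₁ : s₁ ∈ ss.head?) (hsₖ : sₖ ∈ ss.getLast?)
    (hx : x ∈ s₁.head?) (hy : y ∈ sₖ.head?) (hW₁ : W = u ++ [x] ++ z) (hW₂ : W = z' ++ [y] ++ v) :
    ¬ Zi (v ++ u ++ s₁.dropLast) := by
  have hWW : W ++ W = z' ++ [y] ++ v ++ (u ++ [x] ++ z) := by rw [← hW₁, ← hW₂]
  refine H.minGen.not_Zi_append_dropLast H.two_le_length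
    (H.pathIn.append H.pathIn hJ.target_eq_source)
    (H.minGen.not_infix_append_of_isJuncRel H.not_infix_of_isJuncRel H.not_infix_of_isJuncRel hJ)
    (H.mem_R_of_mem s₁ (List.mem_of_mem_head? hs₁)) hx ⟨z' ++ [y], z, by simp [hWW]⟩
    fun r hr h hh hvu => ?_
  have hr' := H.mem_of_mem_SRel r hr
  rcases List.mem_append.1 hvu with hv | hu
  · exact H.nodup.notMem_right_of_idxOf_le (l₁ := z') (by simp [hW₂])
      (H.pairwise.rel_getLast_of_mem (headIdxLE_refl W) hsₖ hr' h hh y hy) hv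
  · exact H.nodup.notMem_left_of_idxOf_le (l₂ := z) (by simp [hW₁])
      (H.pairwise.rel_head_of_mem (headIdxLE_refl W) hs₁ hr' x hx h hh) hu

end MiSetting

end Cases

theorem stmt_13_general (s t : A → V) (Zi : List A → Prop)
    (ω : A → List A) (hω : OmegaSpec s t ω)
    (hadm : Admissible s t Zi)
    (N : Set A) (hN : IsComp s t Zi ω N)
    (ws : List (List A)) (hws : CompEnum s t Zi ω N ws)
    (R : Set (List A)) (hR : MinGen s t Zi N R)
    (ss : List (List A)) (hss : SEnum ws.flatten (SRel ω N R) ss) :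
    ∀ m : List A, IsMi s t Zi ws.flatten ss m → ¬ Zi m := by
  classical
  have hWnd := hws.nodup_flatten hω
  have H : MiSetting s t Zi ω N R ws.flatten ss :=
    { minGen := hR
      two_le_length := hadm.1
      pathIn := hws.pathIn_flatten hω hN
      nodup := hWnd
      not_infix_of_isJuncRel := fun r hr hJ => hws.not_infix_flatten hω hJ (hR.1 r hr).2
      mem_of_mem_SRel := fun r hr => (hss.2.1 r).2 hr
      mem_R_of_mem := fun r hr => ((hss.2.1 r).1 hr).1
      pairwise := hss.pairwise_headIdxLE hWnd }
  rintro m (⟨⟨si, sj⟩, hzip, u, v, v', x, hx, y, hy, hW, rfl⟩ | ⟨-, s₁, hs₁, u, z, hW, rfl⟩ |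
    ⟨-, sₖ, hsₖ, v, z, hW, rfl⟩ | ⟨hJ, s₁, hs₁, sₖ, hsₖ, u, v, z, z', x, hx, y, hy, hW₁, hW₂, rfl⟩)
  · exact H.not_Zi_consecutive hzip hx hy hW
  · exact H.not_Zi_first hs₁ hW
  · exact H.not_Zi_last hsₖ hW
  · exact H.not_Zi_first_last hJ hs₁ hsₖ hx hy hW₁ hW₂

/-- for a special multiserial, locally monomial algebra and a component `N`
with `S_N = {s_1 <_s ⋯ <_s s_k}`, none of the paths `m_i` (`0 ≤ i ≤ k`) of the
definition of `S_N^*` lies in `I_N`. -/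
theorem stmt_13 [Fintype V] [Fintype A] (s t : A → V) (Zi : List A → Prop)
    (ω : A → List A) (hω : OmegaSpec s t ω)
    (hZ : ZeroClosed Zi) (hadm : Admissible s t Zi)
    (hsm : SpecialMultiserial s t Zi)
    (N : Set A) (hN : IsComp s t Zi ω N)
    (ws : List (List A)) (hws : CompEnum s t Zi ω N ws)
    (R : Set (List A)) (hR : MinGen s t Zi N R)
    (ss : List (List A)) (hss : SEnum ws.flatten (SRel ω N R) ss) (hk : ss ≠ []) :
    ∀ m : List A, IsMi s t Zi ws.flatten ss m → ¬ Zi m :=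
  stmt_13_general s t Zi ω hω hadm N hN ws hws R hR ss hss

end UMPPaper
end

section
/- Let A = kQ/I be a special multiserial and locally monomial algebra, N a weakly connected component of G_{Q,I}, and m + I_N, m' + I_N two distinct non-disjoint maximal paths of A_N. Then either m = xρ and m' = ρy, or m = ρx and m' = yρ, for some non-trivial paths x, y, ρ in Q_N. -/
namespace UMPPaper

variable {V A : Type}

/-!
In a special multiserial algebra an arrow has at most one successor and at most one predecessor
with which it forms a path outside `I`. Hence two paths outside `I` through a common arrow `a`
agree on both sides of `a` as far as both extend: the parts after `a` are prefix-comparable and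
the parts before `a` suffix-comparable. Of the four resulting configurations, the two in which
one path contains the other are excluded by maximality; the other two are the overlaps
`m = xρ, m' = ρy` and `m = ρx, m' = yρ`.
-/

def NonzeroLink (s t : A → V) (Zi : List A → Prop) (a b : A) : Prop :=
  t a = s b ∧ ¬ Zi [a, b]

theorem _root_.List.prefix_or_prefix_of_isChain_cons {α : Type*} {R : α → α → Prop}
    (hR : Relator.RightUnique R) :
    ∀ {a : α} {l l' : List α}, (a :: l).IsChain R → (a :: l').IsChain R →
      l <+: l' ∨ l' <+: l
  | _, [], _, _, _ => .inl List.nil_prefix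
  | _, _ :: _, [], _, _ => .inr List.nil_prefix
  | _, b :: l, b' :: l', h, h' => by
    rw [List.isChain_cons_cons] at h h'
    obtain rfl := hR h.1 h'.1
    simpa only [List.cons_prefix_cons, true_and] using
      List.prefix_or_prefix_of_isChain_cons hR h.2 h'.2

theorem _root_.List.suffix_or_suffix_of_isChain_append_singleton {α : Type*}
    {R : α → α → Prop} (hR : Relator.LeftUnique R) {a : α} {l l' : List α}
    (h : (l ++ [a]).IsChain R) (h' : (l' ++ [a]).IsChain R) :
    l <:+ l' ∨ l' <:+ l := by
  have hflip : Relator.RightUnique (fun b c => R c b) := fun _ _ _ hb hc => hR hb hc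
  have hrev : ∀ {k : List α}, (k ++ [a]).IsChain R →
      (a :: k.reverse).IsChain (fun b c => R c b) :=
    fun hk => by simpa [List.isChain_reverse] using List.isChain_reverse.2 hk
  simpa only [List.reverse_prefix] using
    List.prefix_or_prefix_of_isChain_cons hflip (hrev h) (hrev h')

theorem SpecialMultiserial.rightUnique {s t : A → V} {Zi : List A → Prop}
    (hsm : SpecialMultiserial s t Zi) : Relator.RightUnique (NonzeroLink s t Zi) :=
  fun a _ _ hb hc => (hsm a _ _).1 hb hc

theorem SpecialMultiserial.leftUnique {s t : A → V} {Zi : List A → Prop}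
    (hsm : SpecialMultiserial s t Zi) : Relator.LeftUnique (NonzeroLink s t Zi) :=
  fun _ _ c hb hc => (hsm c _ _).2 hb hc

theorem isChain_nonzeroLink_of_not_zero {s t : A → V} {Zi : List A → Prop}
    (hZ : ZeroClosed Zi) :
    ∀ {p : List A}, p.IsChain (fun a b => t a = s b) → ¬ Zi p →
      p.IsChain (NonzeroLink s t Zi)
  | [], _, _ | [_], _, _ => by simp
  | a :: b :: p, hp, hz => by
    rw [List.isChain_cons_cons] at hp ⊢
    exact ⟨⟨hp.1, fun h => hz (hZ _ _ h ⟨[], p, rfl⟩)⟩,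
      isChain_nonzeroLink_of_not_zero hZ hp.2 fun h => hz (hZ _ _ h ⟨[a], [], by simp⟩)⟩

namespace MaxPathIn

variable {s t : A → V} {Zi : List A → Prop} {N : Set A}

theorem isChain_nonzeroLink (hZ : ZeroClosed Zi) {m : List A} (hm : MaxPathIn s t Zi N m) :
    m.IsChain (NonzeroLink s t Zi) :=
  isChain_nonzeroLink_of_not_zero hZ hm.1.1.2 hm.2.1

theorem zero_append_singleton {m : List A} (hm : MaxPathIn s t Zi N m) {c : A} (hc : c ∈ N)
    (h : (m ++ [c]).IsChain (fun a b => t a = s b)) : Zi (m ++ [c]) := by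
  obtain ⟨x, hx⟩ := Option.isSome_iff_exists.1 (List.getLast?_isSome.2 hm.1.1.1)
  exact hm.2.2.1 c hc ⟨x, hx, (List.isChain_append.1 h).2.2 x hx c rfl⟩

theorem zero_cons {m : List A} (hm : MaxPathIn s t Zi N m) {c : A} (hc : c ∈ N)
    (h : (c :: m).IsChain (fun a b => t a = s b)) : Zi (c :: m) := by
  obtain ⟨y, hy⟩ := Option.isSome_iff_exists.1 (List.isSome_head?.2 hm.1.1.1)
  exact hm.2.2.2 c hc ⟨y, hy, (List.isChain_cons.1 h).1 y hy⟩

theorem eq_of_infix (hZ : ZeroClosed Zi) {m m' : List A} (hm : MaxPathIn s t Zi N m)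
    (hm' : MaxPathIn s t Zi N m') (h : m <:+: m') : m = m' := by
  obtain ⟨l, r, rfl⟩ := h
  have hchain : (l ++ m ++ r).IsChain (fun a b => t a = s b) := hm'.1.1.2
  have hN : ∀ x ∈ l ++ m ++ r, x ∈ N := hm'.1.2
  rcases r with _ | ⟨c, r⟩
  · rcases l.eq_nil_or_concat with rfl | ⟨l, c, rfl⟩
    · simp
    · have hz := hm.zero_cons (hN c (by simp)) (hchain.infix ⟨l, [], by simp⟩)
      exact absurd (hZ _ _ hz ⟨l, [], by simp⟩) hm'.2.1
  · have hz := hm.zero_append_singleton (hN c (by simp)) (hchain.infix ⟨l, r, by simp⟩)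
    exact absurd (hZ _ _ hz ⟨l, r, by simp⟩) hm'.2.1

theorem ne_nil_of_overlap (hZ : ZeroClosed Zi) {ρ x y : List A}
    (hm : MaxPathIn s t Zi N (ρ ++ x)) (hm' : MaxPathIn s t Zi N (y ++ ρ))
    (hne : ρ ++ x ≠ y ++ ρ) : x ≠ [] ∧ y ≠ [] := by
  constructor
  · rintro rfl
    exact hne (eq_of_infix hZ hm hm' ⟨y, [], by simp⟩)
  · rintro rfl
    exact hne (eq_of_infix hZ hm' hm ⟨[], x, by simp⟩).symm

end MaxPathIn

theorem stmt_16_general (s t : A → V) (Zi : List A → Prop)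
    (hZ : ZeroClosed Zi)
    (hsm : SpecialMultiserial s t Zi)
    (N : Set A)
    (m m' : List A) (hm : MaxPathIn s t Zi N m) (hm' : MaxPathIn s t Zi N m')
    (hne : m ≠ m') (hnd : ∃ a : A, a ∈ m ∧ a ∈ m') :
    ∃ x y ρ : List A, x ≠ [] ∧ y ≠ [] ∧ ρ ≠ [] ∧
      ((m = x ++ ρ ∧ m' = ρ ++ y) ∨ (m = ρ ++ x ∧ m' = y ++ ρ)) := by
  obtain ⟨a, ham, ham'⟩ := hnd
  obtain ⟨u, v, rfl⟩ := List.append_of_mem ham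
  obtain ⟨u', v', rfl⟩ := List.append_of_mem ham'
  have hc := hm.isChain_nonzeroLink hZ
  have hc' := hm'.isChain_nonzeroLink hZ
  have hv := List.prefix_or_prefix_of_isChain_cons hsm.rightUnique
    (hc.suffix ⟨u, rfl⟩) (hc'.suffix ⟨u', rfl⟩)
  have hu := List.suffix_or_suffix_of_isChain_append_singleton hsm.leftUnique
    (hc.prefix ⟨v, by simp⟩ : (u ++ [a]).IsChain _)
    (hc'.prefix ⟨v', by simp⟩ : (u' ++ [a]).IsChain _)
  rcases hu with ⟨d, rfl⟩ | ⟨d, rfl⟩ <;> rcases hv with ⟨e, rfl⟩ | ⟨e, rfl⟩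
  · exact absurd (hm.eq_of_infix hZ hm' ⟨d, e, by simp⟩) hne
  · obtain ⟨he, hd⟩ := MaxPathIn.ne_nil_of_overlap (ρ := u ++ a :: v') hZ
      (by simpa using hm) (by simpa using hm') (by simpa using hne)
    exact ⟨e, d, u ++ a :: v', he, hd, by simp, .inr ⟨by simp, by simp⟩⟩
  · obtain ⟨he, hd⟩ := MaxPathIn.ne_nil_of_overlap (ρ := u' ++ a :: v) hZ
      (by simpa using hm') (by simpa using hm) (by simpa using hne.symm)
    exact ⟨d, e, u' ++ a :: v, hd, he, by simp, .inl ⟨by simp, by simp⟩⟩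
  · exact absurd (hm'.eq_of_infix hZ hm ⟨d, e, by simp⟩).symm hne

/-- two distinct non-disjoint maximal paths `m, m'` of `A_N` overlap as
`m = xρ, m' = ρy` or `m = ρx, m' = yρ` for some non-trivial paths `x, y, ρ`. -/
theorem stmt_16 [Fintype V] [Fintype A] (s t : A → V) (Zi : List A → Prop)
    (ω : A → List A) (hω : OmegaSpec s t ω)
    (hZ : ZeroClosed Zi) (hadm : Admissible s t Zi)
    (hsm : SpecialMultiserial s t Zi)
    (N : Set A) (hN : IsComp s t Zi ω N)
    (R : Set (List A)) (hR : MinGen s t Zi N R)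
    (m m' : List A) (hm : MaxPathIn s t Zi N m) (hm' : MaxPathIn s t Zi N m')
    (hne : m ≠ m') (hnd : ∃ a : A, a ∈ m ∧ a ∈ m') :
    ∃ x y ρ : List A, x ≠ [] ∧ y ≠ [] ∧ ρ ≠ [] ∧
      ((m = x ++ ρ ∧ m' = ρ ++ y) ∨ (m = ρ ++ x ∧ m' = y ++ ρ)) :=
  stmt_16_general s t Zi hZ hsm N m m' hm hm' hne hnd

end UMPPaper
end
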